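/- For any t ∈ ℝ, φ ∈ ℝ, β ∈ ℝ, the matrix γ(t) = exp(t(cos φ · a + sin φ · b − β c))·exp(t β c) belongs to SO₀(2,1), i.e. it satisfies γ(t)⁻¹ = I γ(t)ᵀ I, det γ(t) = 1, and γ(t)₁₁ ≥ 1. -/

import Mathlib

open Matrix
noncomputable def Imat : Matrix (Fin 3) (Fin 3) ℝ := diagonal ![-1, 1, 1]
noncomputable def amat : Matrix (Fin 3) (Fin 3) ℝ := !![0,1,0; 1,0,0; 0,0,0]
noncomputable def bmat : Matrix (Fin 3) (Fin 3) ℝ := !![0,0,1; 0,0,0; 1,0,0]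
noncomputable def cmat : Matrix (Fin 3) (Fin 3) ℝ := !![0,0,0; 0,0,-1; 0,1,0]
noncomputable def rot2 (η : ℝ) : Matrix (Fin 2) (Fin 2) ℝ :=
  !![Real.cos η, -Real.sin η; Real.sin η, Real.cos η]
noncomputable def Kmat (η : ℝ) : Matrix (Fin 3) (Fin 3) ℝ :=
  !![1,0,0; 0,Real.cos η,-Real.sin η; 0,Real.sin η,Real.cos η]
def inSO21 (C : Matrix (Fin 3) (Fin 3) ℝ) : Prop :=
  C⁻¹ = Imat * Cᵀ * Imat ∧ C.det = 1 ∧ 1 ≤ C 0 0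

lemma hII : Imat * Imat = 1 := by
  ext i j; fin_cases i <;> fin_cases j <;>
    simp [Imat, Matrix.mul_apply, Fin.sum_univ_three, Matrix.one_apply]

lemma hIinv : Imat⁻¹ = Imat := inv_eq_right_inv hII

lemma hII' (A : Matrix (Fin 3) (Fin 3) ℝ) : Imat * (Imat * A) = A := by
  rw [← Matrix.mul_assoc, hII, Matrix.one_mul]

lemma hcancel (M : Matrix (Fin 3) (Fin 3) ℝ) :
    NormedSpace.exp M * NormedSpace.exp (-M) = 1 := by
  have h := Matrix.exp_add_of_commute M (-M) ((Commute.refl M).neg_right)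
  rw [add_neg_cancel, NormedSpace.exp_zero] at h
  exact h.symm

lemma key (M : Matrix (Fin 3) (Fin 3) ℝ) (hM : Imat * Mᵀ * Imat = -M) :
    Imat * (NormedSpace.exp M)ᵀ * Imat = NormedSpace.exp (-M) := by
  rw [← Matrix.exp_transpose, ← hM]
  have hU : IsUnit Imat := ⟨⟨Imat, Imat, hII, hII⟩, rfl⟩
  have := Matrix.exp_conj Imat Mᵀ hU
  rw [hIinv] at this
  exact this.symm

lemma exp_cont (X : Matrix (Fin 3) (Fin 3) ℝ) :
    Continuous fun s : ℝ => NormedSpace.exp (s • X) := by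
  letI : SeminormedRing (Matrix (Fin 3) (Fin 3) ℝ) := Matrix.linftyOpSemiNormedRing
  letI : NormedRing (Matrix (Fin 3) (Fin 3) ℝ) := Matrix.linftyOpNormedRing
  letI : NormedAlgebra ℝ (Matrix (Fin 3) (Fin 3) ℝ) := Matrix.linftyOpNormedAlgebra
  exact (continuous_iff_continuousAt.2 fun x =>
    (NormedSpace.exp_analytic (𝕂 := ℝ) x).continuousAt).comp (continuous_id.smul continuous_const)

lemma ivt_aux (f : ℝ → ℝ) (hf : Continuous f) (hsq : ∀ s, 1 ≤ (f s)^2) (h0 : f 0 = 1)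
    (t : ℝ) : 1 ≤ f t := by
  by_contra h
  push_neg at h
  have hle : f t ≤ -1 := by nlinarith [hsq t]
  have h0m : (0:ℝ) ∈ Set.uIcc (f 0) (f t) := by
    rw [Set.mem_uIcc]; right; constructor <;> linarith
  obtain ⟨s, _, hs⟩ := intermediate_value_uIcc (hf.continuousOn (s := Set.uIcc 0 t)) h0m
  nlinarith [hsq s]

lemma main_lemma (X Y : Matrix (Fin 3) (Fin 3) ℝ)
    (hX : Imat * Xᵀ * Imat = -X) (hY : Imat * Yᵀ * Imat = -Y) (t : ℝ) :
    inSO21 (NormedSpace.exp (t • X) * NormedSpace.exp (t • Y)) := by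
  set g : ℝ → Matrix (Fin 3) (Fin 3) ℝ :=
    fun s => NormedSpace.exp (s • X) * NormedSpace.exp (s • Y) with hg
  have hXs : ∀ s : ℝ, Imat * (s • X)ᵀ * Imat = -(s • X) := fun s => by
    rw [Matrix.transpose_smul, Matrix.mul_smul, Matrix.smul_mul, hX, smul_neg]
  have hYs : ∀ s : ℝ, Imat * (s • Y)ᵀ * Imat = -(s • Y) := fun s => by
    rw [Matrix.transpose_smul, Matrix.mul_smul, Matrix.smul_mul, hY, smul_neg]
  have hright : ∀ s : ℝ, g s * (Imat * (g s)ᵀ * Imat) = 1 := by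
    intro s
    have hsplit : Imat * (g s)ᵀ * Imat =
        (Imat * (NormedSpace.exp (s • Y))ᵀ * Imat) *
        (Imat * (NormedSpace.exp (s • X))ᵀ * Imat) := by
      simp only [hg, Matrix.transpose_mul, Matrix.mul_assoc, hII']
    rw [hsplit, key _ (hXs s), key _ (hYs s), hg]
    calc NormedSpace.exp (s • X) * NormedSpace.exp (s • Y) *
          (NormedSpace.exp (-(s • Y)) * NormedSpace.exp (-(s • X)))
        = NormedSpace.exp (s • X) *
          ((NormedSpace.exp (s • Y) * NormedSpace.exp (-(s • Y))) *
            NormedSpace.exp (-(s • X))) := by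
          simp only [Matrix.mul_assoc]
      _ = 1 := by rw [hcancel, Matrix.one_mul, hcancel]
  have hg0 : g 0 = 1 := by
    simp [hg, NormedSpace.exp_zero]
  have hcont : Continuous g := (exp_cont X).mul (exp_cont Y)
  have hdetsq : ∀ s : ℝ, ((g s).det)^2 = 1 := by
    intro s
    have h := congrArg Matrix.det (hright s)
    have hIdet : Imat.det = -1 := by
      simp [Imat, Matrix.det_diagonal, Fin.prod_univ_three]
    simp only [Matrix.det_mul, Matrix.det_transpose, Matrix.det_one, hIdet] at h
    nlinarith [h]
  have hdet1 : (g t).det = 1 := by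
    have h := ivt_aux (fun s => (g s).det) (hcont.matrix_det) (fun s => (hdetsq s).ge)
      (by show (g 0).det = 1; rw [hg0, Matrix.det_one]) t
    nlinarith [hdetsq t, h]
  have h00sq : ∀ s : ℝ, 1 ≤ (g s 0 0)^2 := by
    intro s
    have h := congrFun (congrFun (hright s) 0) 0
    simp [Matrix.mul_apply, Fin.sum_univ_three, Imat, Matrix.transpose_apply,
      Matrix.diagonal, Matrix.one_apply] at h
    nlinarith [h]
  have h00 : 1 ≤ g t 0 0 :=
    ivt_aux (fun s => g s 0 0) (hcont.matrix_elem 0 0) h00sq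
      (by show g 0 0 0 = 1; rw [hg0]; simp [Matrix.one_apply]) t
  exact ⟨inv_eq_right_inv (hright t), hdet1, h00⟩

theorem stmt16 (t φ β : ℝ) :
    inSO21 (NormedSpace.exp (t • (Real.cos φ • amat + Real.sin φ • bmat - β • cmat)) *
      NormedSpace.exp (t • (β • cmat))) := by
  apply main_lemma
  · ext i j
    fin_cases i <;> fin_cases j <;>
      simp [Imat, amat, bmat, cmat, Matrix.mul_apply, Fin.sum_univ_three, Matrix.diagonal,
        Matrix.transpose_apply, Matrix.vecHead, Matrix.vecTail, Function.comp]
  · ext i j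
    fin_cases i <;> fin_cases j <;>
      simp [Imat, cmat, Matrix.mul_apply, Fin.sum_univ_three, Matrix.diagonal,
        Matrix.transpose_apply, Matrix.vecHead, Matrix.vecTail, Function.comp]
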